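/- For Q = {0,1}, if e : Q^3 → Q has bijective cyclic global map F_e : Q^n → Q^n, and g : Q → C^Q has matrix λ = [[cos θ, -sin θ],[sin θ, cos θ]] (i.e. g(0) = cos θ·[0] + sin θ·[1], g(1) = -sin θ·[0] + cos θ·[1]), then f = g ∘ e forms a QCA: the linear extension of the global transition F_f is unitary. -/

import Mathlib

open scoped BigOperators

/-- Indicator (basis) vector `[q] ∈ ℂ^Q`. -/
noncomputable def ind {Q : Type*} [DecidableEq Q] (q : Q) : Q → ℂ :=
  fun x => if x = q then 1 else 0

/-- View a function `ι → ℂ` as an element of `ℂ^ι`. -/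
def toE {ι : Type*} [Fintype ι] (f : ι → ℂ) : EuclideanSpace ℂ ι := WithLp.toLp 2 f

/-- The linear extension `F̄(X) = Σ_q X(q) • F(q)`. -/
noncomputable def ext {ι : Type*} [Fintype ι]
    (F : ι → EuclideanSpace ℂ ι) (X : EuclideanSpace ℂ ι) : EuclideanSpace ℂ ι :=
  ∑ q, X q • F q

/-- The rotation cell map: `g(0) = cos θ·[0] + sin θ·[1]`,
`g(1) = -sin θ·[0] + cos θ·[1]`. -/
noncomputable def gRot (θ : ℝ) (p : ZMod 2) : EuclideanSpace ℂ (ZMod 2) :=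
  if p = 0 then toE ((Real.cos θ : ℂ) • ind (0 : ZMod 2) + (Real.sin θ : ℂ) • ind 1)
  else toE (-(Real.sin θ : ℂ) • ind (0 : ZMod 2) + (Real.cos θ : ℂ) • ind 1)

lemma cell (θ : ℝ) (p p' : ZMod 2) :
    ∑ a : ZMod 2, (starRingEnd ℂ) (gRot θ p a) * gRot θ p' a
      = if p = p' then 1 else 0 := by
  have h2 : ∀ f : ZMod 2 → ℂ, ∑ a : ZMod 2, f a = f 0 + f 1 := fun f =>
    Fin.sum_univ_two f
  have key : (Real.cos θ : ℂ)^2 + (Real.sin θ : ℂ)^2 = 1 := by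
    norm_cast
    exact Real.cos_sq_add_sin_sq θ
  have hZ : ∀ q : ZMod 2, q = 0 ∨ q = 1 := by decide
  rcases hZ p with rfl | rfl <;> rcases hZ p' with rfl | rfl <;>
    · simp [gRot, toE, ind, h2]
      try simp only [← Complex.ofReal_cos, ← Complex.ofReal_sin, Complex.conj_ofReal]
      try ring_nf
      try simp
      try linear_combination key
      try linear_combination -key

lemma Gorth (θ : ℝ) {n : ℕ} [NeZero n] (p p' : ZMod n → ZMod 2) :
    (inner ℂ (toE fun x : ZMod n → ZMod 2 => ∏ i, gRot θ (p i) (x i))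
      (toE fun x : ZMod n → ZMod 2 => ∏ i, gRot θ (p' i) (x i)) : ℂ)
      = if p = p' then 1 else 0 := by
  have : (inner ℂ (toE fun x : ZMod n → ZMod 2 => ∏ i, gRot θ (p i) (x i))
      (toE fun x : ZMod n → ZMod 2 => ∏ i, gRot θ (p' i) (x i)) : ℂ)
      = ∑ x : ZMod n → ZMod 2,
          ∏ i, ((starRingEnd ℂ) (gRot θ (p i) (x i)) * gRot θ (p' i) (x i)) := by
    simp [PiLp.inner_apply, toE, RCLike.inner_apply, map_prod, Finset.prod_mul_distrib, mul_comm]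
  rw [this,
    ← Fintype.prod_sum (fun i a => (starRingEnd ℂ) (gRot θ (p i) a) * gRot θ (p' i) a)]
  simp only [cell θ]
  rw [Fintype.prod_boole]
  simp [funext_iff]

theorem rotation_qca {n : ℕ} [NeZero n] (hn : 3 ≤ n) (θ : ℝ)
    (e : ZMod 2 → ZMod 2 → ZMod 2 → ZMod 2)
    (hFe : Function.Bijective
      (fun q : ZMod n → ZMod 2 => fun i => e (q (i - 1)) (q i) (q (i + 1)))) :
    ∀ X : EuclideanSpace ℂ (ZMod n → ZMod 2), ‖X‖ = 1 →
      ‖ext (fun q : ZMod n → ZMod 2 =>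
        toE fun x => ∏ i, gRot θ (e (q (i - 1)) (q i) (q (i + 1))) (x i)) X‖ = 1 := by
  intro X hX
  set v := ext (fun q : ZMod n → ZMod 2 =>
        toE fun x => ∏ i, gRot θ (e (q (i - 1)) (q i) (q (i + 1))) (x i)) X with hv
  have horth : ∀ q q' : ZMod n → ZMod 2,
      (inner ℂ (toE fun x : ZMod n → ZMod 2 =>
          ∏ i, gRot θ (e (q (i - 1)) (q i) (q (i + 1))) (x i))
        (toE fun x : ZMod n → ZMod 2 =>
          ∏ i, gRot θ (e (q' (i - 1)) (q' i) (q' (i + 1))) (x i)) : ℂ)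
      = if q = q' then 1 else 0 := by
    intro q q'
    rw [Gorth θ (fun i => e (q (i - 1)) (q i) (q (i + 1)))
        (fun i => e (q' (i - 1)) (q' i) (q' (i + 1)))]
    congr 1
    simp only [eq_iff_iff]
    exact ⟨fun h => hFe.injective (funext (fun i => congrFun h i)), fun h => by rw [h]⟩
  have hinner : (inner ℂ v v : ℂ) = inner ℂ X X := by
    rw [hv]
    unfold ext
    rw [sum_inner]
    simp only [inner_sum, inner_smul_left, inner_smul_right, horth]
    simp [PiLp.inner_apply, RCLike.inner_apply, mul_ite, Finset.mul_sum, -inner_self_eq_norm_sq_to_K]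
  have h2 : ‖v‖ ^ 2 = ‖X‖ ^ 2 := by
    rw [← @inner_self_eq_norm_sq ℂ, ← @inner_self_eq_norm_sq ℂ, hinner]
  rw [hX] at h2
  nlinarith [norm_nonneg v]
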